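/- Let the communication ranges be updated by Algorithm: d_i[k+1] = max_{j∈N^O_i[k]} ‖r_i[k]−r_j[k]‖ + (‖u_i[k]‖+γ)T when N^O_i[k] ∪ {i} ≠ V, and d_i[k+1] = 2·max_j ‖r_i[k]−r_j[k]‖ when N^O_i[k] ∪ {i} = V. Assume all inputs satisfy ‖u_j[k]‖ ≤ γ and, in the second case, each r_j[k+1] lies in the convex hull of {r_1[k],…,r_N[k]}. Then in both cases every outgoing neighbor of agent i at step k remains an outgoing neighbor at step k+1: N^O_i[k] ⊆ N^O_i[k+1]. -/

import Mathlib

/-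
Agent `i` moves by `‖u_i‖ T` and agent `j` by at most `γ T`, so their distance grows by at
most `(‖u_i‖ + γ) T`, exactly the slack the first update rule adds to the current maximal
distance. Under the second rule all next positions lie in the convex hull of the current ones,
hence in the closed ball of radius `M = max_j ‖r_i − r_j‖` around `r_i`, so any two of them are
at distance at most `2 M`.
-/

/-- The outgoing neighbor set of agent `i`: agents `j ≠ i` within range `d i`. -/
noncomputable def outNbr (N : ℕ) (r : Fin N → EuclideanSpace ℝ (Fin 2))
    (d : Fin N → ℝ) (i : Fin N) : Finset (Fin N) :=
  Finset.univ.filter (fun j => j ≠ i ∧ ‖r i - r j‖ ≤ d i)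

open Finset Metric

section NormedSpace

variable {E : Type*} [SeminormedAddCommGroup E]

theorem range_subset_closedBall_sup' {ι : Type*} [Fintype ι] (f : ι → E) (c : E)
    (h : (univ : Finset ι).Nonempty) :
    Set.range f ⊆ closedBall c (univ.sup' h fun j => ‖c - f j‖) := by
  rintro _ ⟨k, rfl⟩
  rw [mem_closedBall, dist_comm, dist_eq_norm]
  exact le_sup' (fun j => ‖c - f j‖) (mem_univ k)

variable [NormedSpace ℝ E]

theorem norm_add_smul_sub_add_smul_le {T : ℝ} (hT : 0 ≤ T) (x y a b : E) :
    ‖(x + T • a) - (y + T • b)‖ ≤ ‖x - y‖ + (‖a‖ + ‖b‖) * T := by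
  have hsplit : (x + T • a) - (y + T • b) = (x - y) + T • (a - b) := by
    rw [smul_sub]; abel
  calc ‖(x + T • a) - (y + T • b)‖ ≤ ‖x - y‖ + ‖T • (a - b)‖ := by
        rw [hsplit]; exact norm_add_le _ _
    _ ≤ ‖x - y‖ + (‖a‖ + ‖b‖) * T := by
        rw [norm_smul, Real.norm_of_nonneg hT, mul_comm]
        gcongr
        exact norm_sub_le a b

theorem dist_le_two_mul_of_mem_convexHull {s : Set E} {c x y : E} {M : ℝ}
    (hs : s ⊆ closedBall c M) (hx : x ∈ convexHull ℝ s) (hy : y ∈ convexHull ℝ s) :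
    dist x y ≤ 2 * M := by
  have hhull : convexHull ℝ s ⊆ closedBall c M := convexHull_min hs (convex_closedBall c M)
  calc dist x y ≤ dist x c + dist y c := dist_triangle_right x y c
    _ ≤ M + M := add_le_add (hhull hx) (hhull hy)
    _ = 2 * M := (two_mul M).symm

end NormedSpace

theorem mem_outNbr {N : ℕ} {r : Fin N → EuclideanSpace ℝ (Fin 2)} {d : Fin N → ℝ}
    {i j : Fin N} : j ∈ outNbr N r d i ↔ j ≠ i ∧ ‖r i - r j‖ ≤ d i := by
  simp [outNbr]

theorem modified_algorithm_preserves_general (N : ℕ) (T γ : ℝ) (hT : 0 < T)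
    (r r' u : Fin N → EuclideanSpace ℝ (Fin 2)) (d d' : Fin N → ℝ)
    (hdyn : ∀ j, r' j = r j + T • u j)
    (hu : ∀ j, ‖u j‖ ≤ γ)
    (hcase1 : ∀ i, insert i (outNbr N r d i) ≠ Finset.univ →
      ∀ hne : (outNbr N r d i).Nonempty,
        d' i = (outNbr N r d i).sup' hne (fun j => ‖r i - r j‖)
          + (‖u i‖ + γ) * T)
    (hcase2 : ∀ i, insert i (outNbr N r d i) = Finset.univ →
      d' i = 2 * Finset.univ.sup' ⟨i, Finset.mem_univ i⟩
        (fun j => ‖r i - r j‖))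
    (hconv : ∀ i, insert i (outNbr N r d i) = Finset.univ →
      ∀ j, r' j ∈ convexHull ℝ (Set.range r)) :
    ∀ i, outNbr N r d i ⊆ outNbr N r' d' i := by
  intro i j hj
  obtain ⟨hji, -⟩ := mem_outNbr.1 hj
  refine mem_outNbr.2 ⟨hji, ?_⟩
  by_cases hall : insert i (outNbr N r d i) = univ
  · rw [hcase2 i hall, ← dist_eq_norm]
    exact dist_le_two_mul_of_mem_convexHull (range_subset_closedBall_sup' r (r i) _)
      (hconv i hall i) (hconv i hall j)
  · rw [hcase1 i hall ⟨j, hj⟩]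
    calc ‖r' i - r' j‖ ≤ ‖r i - r j‖ + (‖u i‖ + ‖u j‖) * T := by
          rw [hdyn i, hdyn j]; exact norm_add_smul_sub_add_smul_le hT.le _ _ _ _
      _ ≤ (outNbr N r d i).sup' ⟨j, hj⟩ (fun k => ‖r i - r k‖) + (‖u i‖ + γ) * T := by
          gcongr
          · exact le_sup' (fun k => ‖r i - r k‖) hj
          · exact hu j

/-- Under the modified range-control algorithm
(`d_i[k+1] = max_{j∈N^O_i[k]} ‖r_i[k]−r_j[k]‖ + (‖u_i[k]‖+γ)T` when
`N^O_i[k] ∪ {i} ≠ V`, and `d_i[k+1] = 2·max_j ‖r_i[k]−r_j[k]‖` when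
`N^O_i[k] ∪ {i} = V`), with bounded inputs and — in the second case — next
positions in the convex hull of current ones, every outgoing neighbor at step
`k` remains an outgoing neighbor at step `k+1`. -/
theorem modified_algorithm_preserves (N : ℕ) (T γ : ℝ) (hT : 0 < T)
    (hγ : 0 < γ)
    (r r' u : Fin N → EuclideanSpace ℝ (Fin 2)) (d d' : Fin N → ℝ)
    (hdyn : ∀ j, r' j = r j + T • u j)
    (hu : ∀ j, ‖u j‖ ≤ γ)
    (hcase1 : ∀ i, insert i (outNbr N r d i) ≠ Finset.univ →
      ∀ hne : (outNbr N r d i).Nonempty,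
        d' i = (outNbr N r d i).sup' hne (fun j => ‖r i - r j‖)
          + (‖u i‖ + γ) * T)
    (hcase2 : ∀ i, insert i (outNbr N r d i) = Finset.univ →
      d' i = 2 * Finset.univ.sup' ⟨i, Finset.mem_univ i⟩
        (fun j => ‖r i - r j‖))
    (hconv : ∀ i, insert i (outNbr N r d i) = Finset.univ →
      ∀ j, r' j ∈ convexHull ℝ (Set.range r)) :
    ∀ i, outNbr N r d i ⊆ outNbr N r' d' i :=
  modified_algorithm_preserves_general N T γ hT r r' u d d' hdyn hu hcase1 hcase2 hconv
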